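/- arXiv:0810.3603 — 2 statements merged into one kernel-verified Lean document; each statement's English description precedes it below -/
import Mathlib

section
/- Let T be a Hurwitz tree of type (G,p) with G cyclic of order p^n, let b be a leaf with G_b = G, and let χ be a faithful irreducible character of G. Then d(B, b) = (np - n + 1)/(p - 1) - δ_T(χ), where B is the set of all leaves and δ_T = δ_{v_0} is the depth of the tree. -/
open Finset

/-- A rooted metric tree: a finite set of vertices with a parent function, a root, a
unique trunk edge at the root, and a nonnegative rational thickness attached to each
edge (recorded at its target vertex), which vanishes exactly at the leaves. -/
structure MetricRootedTree where
  V : Type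
  [fin : Fintype V]
  [deq : DecidableEq V]
  root : V
  parent : V → V
  parent_root : parent root = root
  reaches_root : ∀ v, ∃ n : ℕ, parent^[n] v = root
  trunk : V
  trunk_ne : trunk ≠ root
  trunk_parent : parent trunk = root
  trunk_unique : ∀ w, w ≠ root → parent w = root → w = trunk
  eps : V → ℚ
  eps_nonneg : ∀ v, 0 ≤ eps v
  eps_zero_iff : ∀ v, v ≠ root → (eps v = 0 ↔ ∀ w, parent w = v → w = v)

attribute [instance] MetricRootedTree.fin MetricRootedTree.deq

namespace MetricRootedTree

variable (T : MetricRootedTree)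

/-- `v ≤ w` : there is an oriented path from `v` down to `w`. -/
def le (v w : T.V) : Prop := ∃ n : ℕ, T.parent^[n] w = v

/-- A leaf is a maximal vertex (no children) other than the root. -/
def IsLeaf (v : T.V) : Prop := v ≠ T.root ∧ ∀ w, T.parent w = v → w = v

open Classical in
/-- The set `B` of leaves. -/
noncomputable def leaves : Finset T.V := Finset.univ.filter T.IsLeaf

open Classical in
/-- Inverse distance between two leaves: the sum of the thicknesses of the edges on the
common initial segment of the paths from the root to `b₁` and to `b₂`. -/
noncomputable def idist (b₁ b₂ : T.V) : ℚ :=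
  ∑ v ∈ Finset.univ.filter (fun v => T.le v b₁ ∧ T.le v b₂ ∧ v ≠ T.root), T.eps v

/-- The density of a set of leaves `A` at `b ∈ A`: `d(A,b) = Σ_{b' ∈ A, b' ≠ b} d(b,b')`. -/
noncomputable def density (A : Finset T.V) (b : T.V) : ℚ :=
  ∑ b' ∈ A.erase b, T.idist b b'

open Classical in
/-- `n(A,v) = |{b' ∈ A : b' ≠ b, v ≤ b'}|`. -/
noncomputable def nCount (A : Finset T.V) (b v : T.V) : ℕ :=
  ((A.erase b).filter (fun b' => T.le v b')).card

end MetricRootedTree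

section Characters

open Classical

variable {G : Type} [Group G] [Fintype G]

/-- Inner product of class functions on a finite group. -/
noncomputable def innerCF (χ₁ χ₂ : G → ℂ) : ℂ :=
  (Fintype.card G : ℂ)⁻¹ * ∑ g : G, (starRingEnd ℂ) (χ₁ g) * χ₂ g

/-- Induction of a class function supported on a subgroup `H ≤ G` to `G`. -/
noncomputable def indCF (H : Subgroup G) (f : G → ℂ) : G → ℂ :=
  fun g => (Nat.card H : ℂ)⁻¹ * ∑ x : G, f (x⁻¹ * g * x)

open Classical in
/-- The augmentation character `u_H = r_H - 1_H` of `H`, extended by zero to `G`. -/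
noncomputable def augChar (H : Subgroup G) : G → ℂ :=
  fun h => if h ∈ H then (if h = 1 then (Nat.card H : ℂ) - 1 else -1) else 0

/-- The induced augmentation character `(u_H)^* = Ind_H^G (r_H - 1_H)`. -/
noncomputable def indAug (H : Subgroup G) : G → ℂ := indCF H (augChar H)

open Classical in
/-- The class function `δ_H^mult` of a cyclic `p`-subgroup `H ≤ G` of order `p^m`
(extended by zero to `G`): `δ(σ^a) = -p^(i+1)/(p-1)` for `σ^a ≠ 1` with `i = ord_p a`
(so that `σ^a` has order `p^(m-i)`), and `δ(1) = m·p^m`. -/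
noncomputable def deltaMultSub (p : ℕ) (H : Subgroup G) : G → ℂ :=
  fun h =>
    if h ∈ H then
      (if h = 1 then ((Nat.card H).factorization p : ℂ) * (Nat.card H : ℂ)
       else -((p : ℂ) ^ ((Nat.card H).factorization p - (orderOf h).factorization p + 1))
              / ((p : ℂ) - 1))
    else 0

end Characters

open Classical in
/-- The set of children (successors) of a vertex. -/
noncomputable def MetricRootedTree.children (T : MetricRootedTree) (v : T.V) : Finset T.V :=
  Finset.univ.filter (fun w => T.parent w = v ∧ w ≠ v)

/-- A Hurwitz tree of type `(G,p)`: a rooted metric tree with monodromy groups `G_v`,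
Artin characters `a_e` (attached to the target vertex of each edge) and depth characters
`δ_v`, subject to axioms (H1)–(H5) of Brewis–Wewers. -/
structure HurwitzTree (G : Type) [Group G] [Fintype G] (p : ℕ) extends MetricRootedTree where
  Gv : V → Subgroup G
  av : V → G → ℂ
  dv : V → G → ℂ
  -- (H1): monodromy groups decrease (up to conjugacy) along edges …
  h1_sub : ∀ v w, parent w = v → w ≠ v → ∃ g : G, ∀ x ∈ Gv w, g * x * g⁻¹ ∈ Gv v
  -- … with branching `Σ_{v → v'} [G_v : G_{v'}] > 1` at interior non-root vertices …
  h1_branch : ∀ v, v ≠ root → ¬ toMetricRootedTree.IsLeaf v →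
    1 < ∑ w ∈ toMetricRootedTree.children v, Nat.card (Gv v) / Nat.card (Gv w)
  -- … and monodromy group `G` at the root and at the target of the trunk.
  h1_root : Gv root = ⊤
  h1_trunk : Gv trunk = ⊤
  -- (H2): the monodromy group at each leaf is nontrivial and cyclic.
  h2 : ∀ b, toMetricRootedTree.IsLeaf b → Gv b ≠ ⊥ ∧ IsCyclic (Gv b)
  -- (H3): the Artin characters.
  h3_leaf : ∀ b, toMetricRootedTree.IsLeaf b → av b = indAug (Gv b)
  h3_inner : ∀ v, v ≠ root → ¬ toMetricRootedTree.IsLeaf v →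
    av v = fun g => ∑ w ∈ toMetricRootedTree.children v, av w g
  -- (H4): the depth characters, `δ_{t(e)} = δ_{s(e)} + ε_e·(a_e - (u_{G_{t(e)}})^*)`.
  h4 : ∀ v, v ≠ root →
    dv v = fun g => dv (parent v) g + (eps v : ℂ) * (av v g - indAug (Gv v) g)
  -- (H5): at each leaf, `δ_b` is induced from `δ^mult` of the Sylow `p`-subgroup of `G_b`.
  h5 : ∀ b, toMetricRootedTree.IsLeaf b → ∀ P : Subgroup G, P ≤ Gv b → IsPGroup p P →
    (∀ Q : Subgroup G, Q ≤ Gv b → IsPGroup p Q → Q ≤ P) →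
    dv b = indCF P (deltaMultSub p P)

namespace HurwitzTree

variable {G : Type} [Group G] [Fintype G] {p : ℕ} (T : HurwitzTree G p)

/-- The depth `δ_T` of a Hurwitz tree. -/
noncomputable def depth : G → ℂ := T.dv T.root

/-- The Artin character `a_T` of a Hurwitz tree (the Artin character of the trunk). -/
noncomputable def artin : G → ℂ := T.av T.trunk

end HurwitzTree

section CharAux

set_option linter.unusedSectionVars false
open Classical

variable {G : Type} [Group G] [Fintype G]

noncomputable def psiAux (χ : G →* ℂˣ) : G → ℂ := fun g => (starRingEnd ℂ) (χ g : ℂ)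

lemma psiAux_one (χ : G →* ℂˣ) : psiAux χ 1 = 1 := by simp [psiAux]

lemma psiAux_mul (χ : G →* ℂˣ) (a b : G) : psiAux χ (a*b) = psiAux χ a * psiAux χ b := by
  simp [psiAux, map_mul]

lemma sum_psi_subgroup (χ : G →* ℂˣ) (hχ : Function.Injective χ) (H : Subgroup G)
    (hH : H ≠ ⊥) : ∑ g : G, (if g ∈ H then psiAux χ g else 0) = 0 := by
  obtain ⟨h₀, h₀H, h₀ne⟩ : ∃ h₀, h₀ ∈ H ∧ h₀ ≠ 1 := by
    by_contra hcon
    push_neg at hcon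
    exact hH (Subgroup.eq_bot_iff_forall H |>.mpr fun x hx => hcon x hx)
  have hpsi : psiAux χ h₀ ≠ 1 := by
    intro h
    have : (χ h₀ : ℂ) = 1 := by
      have := congrArg (starRingEnd ℂ) h
      simpa [psiAux] using this
    exact h₀ne (hχ (by ext; simp [this]))
  have key : psiAux χ h₀ * (∑ g : G, (if g ∈ H then psiAux χ g else 0))
      = ∑ g : G, (if g ∈ H then psiAux χ g else 0) := by
    rw [Finset.mul_sum]
    calc ∑ g : G, psiAux χ h₀ * (if g ∈ H then psiAux χ g else 0)
        = ∑ g : G, (if (Equiv.mulLeft h₀) g ∈ H then psiAux χ ((Equiv.mulLeft h₀) g) else 0) := by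
          refine Finset.sum_congr rfl fun g _ => ?_
          by_cases hg : g ∈ H
          · simp [hg, H.mul_mem h₀H hg, Equiv.mulLeft, psiAux_mul]
          · have : ¬ (h₀ * g ∈ H) := fun hmem => hg (by simpa using H.mul_mem (H.inv_mem h₀H) hmem)
            simp [hg, this, Equiv.mulLeft]
      _ = ∑ g : G, (if g ∈ H then psiAux χ g else 0) :=
          Equiv.sum_comp (Equiv.mulLeft h₀) (fun g => if g ∈ H then psiAux χ g else 0)
  by_contra hne
  exact hpsi (mul_right_cancel₀ hne (by rw [key, one_mul]))

lemma sum_psi_univ (χ : G →* ℂˣ) (hχ : Function.Injective χ) (hnt : Nontrivial G) :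
    ∑ g : G, psiAux χ g = 0 := by
  have htb : (⊤ : Subgroup G) ≠ ⊥ := by
    intro h
    obtain ⟨x, y, hxy⟩ := hnt
    have hx : x ∈ (⊤ : Subgroup G) := trivial
    have hy : y ∈ (⊤ : Subgroup G) := trivial
    rw [h, Subgroup.mem_bot] at hx hy
    exact hxy (hx.trans hy.symm)
  have := sum_psi_subgroup χ hχ ⊤ htb
  simpa using this

end CharAux


section MoreChar

set_option linter.unusedSectionVars false
set_option maxHeartbeats 800000

open Classical

variable {G : Type} [Group G] [Fintype G]

lemma innerCF_add (χf f h : G → ℂ) :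
    innerCF χf (fun g => f g + h g) = innerCF χf f + innerCF χf h := by
  unfold innerCF
  rw [← mul_add, ← Finset.sum_add_distrib]
  congr 1
  exact Finset.sum_congr rfl fun g _ => by ring

lemma innerCF_smulsum {ι : Type*} (χf : G → ℂ) (s : Finset ι) (c : ι → ℂ) (h : ι → G → ℂ) :
    innerCF χf (fun g => ∑ i ∈ s, c i * h i g) = ∑ i ∈ s, c i * innerCF χf (h i) := by
  unfold innerCF
  calc (Fintype.card G : ℂ)⁻¹ * ∑ g : G, (starRingEnd ℂ) (χf g) * ∑ i ∈ s, c i * h i g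
      = (Fintype.card G : ℂ)⁻¹ * ∑ g : G, ∑ i ∈ s, c i * ((starRingEnd ℂ) (χf g) * h i g) := by
        congr 1
        refine Finset.sum_congr rfl fun g _ => ?_
        rw [Finset.mul_sum]
        exact Finset.sum_congr rfl fun i _ => by ring
    _ = (Fintype.card G : ℂ)⁻¹ * ∑ i ∈ s, ∑ g : G, c i * ((starRingEnd ℂ) (χf g) * h i g) := by
        rw [Finset.sum_comm]
    _ = ∑ i ∈ s, c i * ((Fintype.card G : ℂ)⁻¹ * ∑ g : G, (starRingEnd ℂ) (χf g) * h i g) := by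
        rw [Finset.mul_sum]
        refine Finset.sum_congr rfl fun i _ => ?_
        rw [Finset.mul_sum, Finset.mul_sum, Finset.mul_sum]
        exact Finset.sum_congr rfl fun g _ => by ring

lemma innerCF_sub (χf f h : G → ℂ) :
    innerCF χf (fun g => f g - h g) = innerCF χf f - innerCF χf h := by
  unfold innerCF
  rw [← mul_sub, ← Finset.sum_sub_distrib]
  congr 1
  exact Finset.sum_congr rfl fun g _ => by ring

lemma innerCF_fun_sum {ι : Type*} (χf : G → ℂ) (s : Finset ι) (h : ι → G → ℂ) :
    innerCF χf (fun g => ∑ i ∈ s, h i g) = ∑ i ∈ s, innerCF χf (h i) := by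
  have := innerCF_smulsum χf s (fun _ => (1:ℂ)) h
  simpa using this

lemma conjmul_aux (hcomm : ∀ a b : G, a * b = b * a) (x g : G) : x⁻¹ * g * x = g := by
  rw [mul_assoc, hcomm g x, ← mul_assoc, inv_mul_cancel, one_mul]

lemma card_pos_complex (H : Subgroup G) : (Nat.card H : ℂ) ≠ 0 := by
  have : 0 < Nat.card H := Nat.card_pos
  exact_mod_cast this.ne'

lemma innerCF_indAug (χ : G →* ℂˣ) (hχ : Function.Injective χ)
    (hcomm : ∀ a b : G, a * b = b * a) (H : Subgroup G) (hH : H ≠ ⊥) :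
    innerCF (fun g => (χ g : ℂ)) (indAug H) = 1 := by
  have hind : ∀ g, indAug H g = (Nat.card H : ℂ)⁻¹ * ((Fintype.card G : ℂ) * augChar H g) := by
    intro g
    unfold indAug indCF
    congr 1
    rw [Finset.sum_congr rfl fun x _ => by rw [conjmul_aux hcomm]]
    simp [Finset.sum_const, Finset.card_univ, nsmul_eq_mul]
  have key : ∑ g : G, psiAux χ g * augChar H g = (Nat.card H : ℂ) := by
    have h1 : ∀ g : G, psiAux χ g * augChar H g
        = (if g = 1 then (Nat.card H : ℂ) else 0) - (if g ∈ H then psiAux χ g else 0) := by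
      intro g
      unfold augChar
      by_cases hg1 : g = 1
      · subst hg1; simp [H.one_mem, psiAux_one]
      · by_cases hgH : g ∈ H
        · simp only [hgH, if_true, hg1, if_false]; ring
        · have : g ≠ 1 := hg1
          simp [hgH, hg1]
    rw [Finset.sum_congr rfl fun g _ => h1 g, Finset.sum_sub_distrib,
      sum_psi_subgroup χ hχ H hH, Finset.sum_ite_eq' Finset.univ (1:G) (fun _ => (Nat.card H : ℂ))]
    simp
  have hcG : (Fintype.card G : ℂ) ≠ 0 := by
    exact_mod_cast (Fintype.card_pos (α := G)).ne'
  unfold innerCF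
  rw [Finset.sum_congr rfl fun g _ => by rw [hind g]]
  have step : ∑ g : G, (starRingEnd ℂ) ((χ g : ℂ)) *
      ((Nat.card H : ℂ)⁻¹ * ((Fintype.card G : ℂ) * augChar H g))
      = (Nat.card H : ℂ)⁻¹ * (Fintype.card G : ℂ) * ∑ g : G, psiAux χ g * augChar H g := by
    rw [Finset.mul_sum]
    exact Finset.sum_congr rfl fun g _ => by simp only [psiAux]; ring
  rw [step, key]
  field_simp

end MoreChar

section Delta

set_option linter.unusedSectionVars false
set_option maxHeartbeats 1000000

open Classical

lemma geomAux (x : ℂ) : ∀ n k : ℕ, k ≤ n →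
    ∑ j ∈ Finset.range (n+1), (if k ≤ j then (x-1)*x^(n-j) else 0) = x^(n-k+1) - 1 := by
  intro n
  induction n with
  | zero =>
    intro k hk
    interval_cases k
    simp [Finset.sum_range_succ]
  | succ n ih =>
    intro k hk
    rw [Finset.sum_range_succ]
    by_cases hkn : k ≤ n
    · have congr1 : ∀ j ∈ Finset.range (n+1),
          (if k ≤ j then (x-1)*x^(n+1-j) else 0) = x * (if k ≤ j then (x-1)*x^(n-j) else 0) := by
        intro j hj
        rw [Finset.mem_range] at hj
        have : n + 1 - j = (n - j) + 1 := by omega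
        rw [this]
        by_cases h : k ≤ j
        · simp only [if_pos h, pow_succ]; ring
        · simp [h]
      rw [Finset.sum_congr rfl congr1, ← Finset.mul_sum, ih k hkn]
      have h1 : n + 1 - k + 1 = (n - k + 1) + 1 := by omega
      have h2 : n + 1 - (n+1) = 0 := by omega
      rw [h1, if_pos (by omega : k ≤ n + 1), h2, pow_zero]
      ring
    · have hk1 : k = n + 1 := by omega
      subst hk1
      have congr0 : ∀ j ∈ Finset.range (n+1),
          (if n+1 ≤ j then (x-1)*x^(n+1-j) else 0) = 0 := by
        intro j hj
        rw [Finset.mem_range] at hj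
        rw [if_neg (by omega)]
      rw [Finset.sum_congr rfl congr0, Finset.sum_const, smul_zero, zero_add,
        if_pos le_rfl]
      simp

variable {G : Type} [Group G] [Fintype G]

/-- the subgroup of elements killed by p^j, in an abelian group -/
noncomputable def torsionSub (hcomm : ∀ a b : G, a * b = b * a) (m : ℕ) : Subgroup G where
  carrier := {g | g ^ m = 1}
  one_mem' := by simp
  mul_mem' := by
    intro a b ha hb
    have h : (a*b)^m = a^m * b^m := Commute.mul_pow (hcomm a b) m
    simp only [Set.mem_setOf_eq] at *
    rw [h, ha, hb, one_mul]
  inv_mem' := by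
    intro a ha
    simp only [Set.mem_setOf_eq] at *
    rw [inv_pow, ha, inv_one]

lemma sum_psi_pow_eq_one {p n : ℕ} (hp : p.Prime) (χ : G →* ℂˣ)
    (hχ : Function.Injective χ) (hcomm : ∀ a b : G, a * b = b * a)
    (hcard : Nat.card G = p ^ n) (hn : 0 < n) (j : ℕ) (hj : 1 ≤ j) :
    ∑ g : G, (if g ^ (p^j) = 1 then psiAux χ g else 0) = 0 := by
  have hdvd : p ∣ Fintype.card G := by
    rw [← Nat.card_eq_fintype_card, hcard]
    exact dvd_pow_self p hn.ne'
  haveI := Fact.mk hp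
  obtain ⟨g₀, hg₀⟩ := exists_prime_orderOf_dvd_card p hdvd
  have hg₀ne : g₀ ≠ 1 := by
    intro h
    rw [h, orderOf_one] at hg₀
    exact hp.one_lt.ne' hg₀.symm
  have hg₀mem : g₀ ^ (p^j) = 1 := by
    apply orderOf_dvd_iff_pow_eq_one.mp
    rw [hg₀]
    exact dvd_pow_self p (by omega)
  have hbot : torsionSub hcomm (p^j) ≠ ⊥ := by
    intro h
    have : g₀ ∈ torsionSub hcomm (p^j) := hg₀mem
    rw [h, Subgroup.mem_bot] at this
    exact hg₀ne this
  calc ∑ g : G, (if g ^ (p^j) = 1 then psiAux χ g else 0)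
      = ∑ g : G, (if g ∈ torsionSub hcomm (p^j) then psiAux χ g else 0) :=
        Finset.sum_congr rfl fun g _ => if_congr Iff.rfl rfl rfl
    _ = 0 := sum_psi_subgroup χ hχ (torsionSub hcomm (p^j)) hbot

lemma order_eq_pow {p n : ℕ} (hp : p.Prime) (hcard : Nat.card G = p ^ n) (g : G) :
    ∃ k ≤ n, orderOf g = p ^ k ∧ (orderOf g).factorization p = k := by
  have hdvd : orderOf g ∣ p ^ n := by
    rw [← hcard, Nat.card_eq_fintype_card]
    exact orderOf_dvd_card
  obtain ⟨k, hk, hord⟩ := (Nat.dvd_prime_pow hp).mp hdvd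
  refine ⟨k, hk, hord, ?_⟩
  rw [hord, hp.factorization_pow, Finsupp.single_eq_same]

lemma innerCF_deltaTop {p n : ℕ} (hp : p.Prime) (χ : G →* ℂˣ)
    (hχ : Function.Injective χ) (hcomm : ∀ a b : G, a * b = b * a)
    (hcard : Nat.card G = p ^ n) (hn : 0 < n) :
    innerCF (fun g => (χ g : ℂ)) (indCF ⊤ (deltaMultSub p ⊤)) =
      ((n * p : ℂ) - n + 1) / ((p : ℂ) - 1) := by
  have hcT : Nat.card (⊤ : Subgroup G) = p ^ n := by
    rw [← hcard]; exact Subgroup.card_top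
  have hfacT : (Nat.card (⊤ : Subgroup G)).factorization p = n := by
    rw [hcT, hp.factorization_pow, Finsupp.single_eq_same]
  have hcGf : (Fintype.card G : ℂ) = (p:ℂ)^n := by
    rw [← Nat.card_eq_fintype_card, hcard]; push_cast; ring
  have hp1 : ((p:ℂ) - 1) ≠ 0 := by
    intro h
    have : (p:ℂ) = 1 := by linear_combination h
    have : p = 1 := by exact_mod_cast this
    exact hp.one_lt.ne' this
  have hpn0 : ((p:ℂ))^n ≠ 0 := by
    apply pow_ne_zero
    exact_mod_cast hp.pos.ne'
  -- indCF ⊤ f = f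
  have hind : ∀ g, indCF (⊤ : Subgroup G) (deltaMultSub p ⊤) g = deltaMultSub p ⊤ g := by
    intro g
    unfold indCF
    rw [Finset.sum_congr rfl fun x _ => by rw [conjmul_aux hcomm]]
    rw [Finset.sum_const, Finset.card_univ, nsmul_eq_mul, ← mul_assoc,
      ← Nat.card_eq_fintype_card, ← Subgroup.card_top (G := G),
      inv_mul_cancel₀ (card_pos_complex ⊤), one_mul]
  -- the main sum
  set δ := deltaMultSub p (⊤ : Subgroup G) with hδ
  have hδ1 : δ 1 = (n : ℂ) * (p:ℂ)^n := by
    show deltaMultSub p (⊤ : Subgroup G) 1 = _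
    unfold deltaMultSub
    rw [if_pos (Subgroup.mem_top (1:G)), if_pos rfl, hfacT, hcT]
    push_cast; ring
  have hδg : ∀ g : G, g ≠ 1 →
      δ g = -((p:ℂ) ^ (n - (orderOf g).factorization p + 1)) / ((p:ℂ) - 1) := by
    intro g hg
    show deltaMultSub p (⊤ : Subgroup G) g = _
    unfold deltaMultSub
    rw [if_pos (Subgroup.mem_top g), if_neg hg, hfacT]
  -- M = ∑_{g ≠ 1} ψ g * p^(n - k_g + 1) = -p^n
  have hM : ∑ g ∈ Finset.univ.erase (1:G), psiAux χ g * (p:ℂ)^(n - (orderOf g).factorization p + 1)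
      = -((p:ℂ)^n) := by
    have hnt : Nontrivial G := by
      have : 1 < Fintype.card G := by
        rw [← Nat.card_eq_fintype_card, hcard]
        exact Nat.one_lt_pow hn.ne' hp.one_lt
      exact Fintype.one_lt_card_iff_nontrivial.mp this
    have step1 : ∀ g ∈ Finset.univ.erase (1:G),
        psiAux χ g * (p:ℂ)^(n - (orderOf g).factorization p + 1)
        = psiAux χ g + ∑ j ∈ Finset.range (n+1),
            (if (orderOf g).factorization p ≤ j then psiAux χ g * (((p:ℂ)-1)*(p:ℂ)^(n-j)) else 0) := by
      intro g hg
      obtain ⟨k, hk, hord, hfac⟩ := order_eq_pow hp hcard g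
      rw [hfac]
      have hgeo := geomAux (p:ℂ) n k hk
      have : ∑ j ∈ Finset.range (n+1), (if k ≤ j then psiAux χ g * (((p:ℂ)-1)*(p:ℂ)^(n-j)) else 0)
          = psiAux χ g * ∑ j ∈ Finset.range (n+1), (if k ≤ j then ((p:ℂ)-1)*(p:ℂ)^(n-j) else 0) := by
        rw [Finset.mul_sum]
        exact Finset.sum_congr rfl fun j _ => by by_cases h : k ≤ j <;> simp [h]
      rw [this, hgeo]
      ring
    rw [Finset.sum_congr rfl step1, Finset.sum_add_distrib]
    -- first part: ∑_{g≠1} ψ g = -1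
    have hfirst : ∑ g ∈ Finset.univ.erase (1:G), psiAux χ g = -1 := by
      rw [Finset.sum_erase_eq_sub (Finset.mem_univ (1:G)), sum_psi_univ χ hχ hnt, psiAux_one]
      ring
    rw [hfirst]
    -- second part
    have hswap : ∑ g ∈ Finset.univ.erase (1:G), ∑ j ∈ Finset.range (n+1),
        (if (orderOf g).factorization p ≤ j then psiAux χ g * (((p:ℂ)-1)*(p:ℂ)^(n-j)) else 0)
        = ∑ j ∈ Finset.range (n+1), ∑ g ∈ Finset.univ.erase (1:G),
        (if (orderOf g).factorization p ≤ j then psiAux χ g * (((p:ℂ)-1)*(p:ℂ)^(n-j)) else 0) :=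
      Finset.sum_comm
    rw [hswap]
    have hinner : ∀ j ∈ Finset.range (n+1), ∑ g ∈ Finset.univ.erase (1:G),
        (if (orderOf g).factorization p ≤ j then psiAux χ g * (((p:ℂ)-1)*(p:ℂ)^(n-j)) else 0)
        = (if 1 ≤ j then -(((p:ℂ)-1)*(p:ℂ)^(n-j)) else 0) := by
      intro j hj
      have hcond : ∀ g : G, ((orderOf g).factorization p ≤ j) ↔ (g ^ (p^j) = 1) := by
        intro g
        obtain ⟨k, hk, hord, hfac⟩ := order_eq_pow hp hcard g
        rw [hfac, ← orderOf_dvd_iff_pow_eq_one, hord]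
        exact (Nat.pow_dvd_pow_iff_le_right hp.one_lt).symm
      have hrw : ∀ g ∈ Finset.univ.erase (1:G),
          (if (orderOf g).factorization p ≤ j then psiAux χ g * (((p:ℂ)-1)*(p:ℂ)^(n-j)) else 0)
          = (if g ^ (p^j) = 1 then psiAux χ g else 0) * (((p:ℂ)-1)*(p:ℂ)^(n-j)) := by
        intro g _
        by_cases h : (orderOf g).factorization p ≤ j
        · rw [if_pos h, if_pos ((hcond g).mp h)]
        · rw [if_neg h, if_neg (fun hc => h ((hcond g).mpr hc)), zero_mul]
      rw [Finset.sum_congr rfl hrw, ← Finset.sum_mul]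
      have herase : ∑ g ∈ Finset.univ.erase (1:G), (if g ^ (p^j) = 1 then psiAux χ g else 0)
          = (∑ g : G, (if g ^ (p^j) = 1 then psiAux χ g else 0)) - 1 := by
        rw [Finset.sum_erase_eq_sub (Finset.mem_univ (1:G))]
        simp [psiAux_one]
      rw [herase]
      by_cases hj1 : 1 ≤ j
      · rw [sum_psi_pow_eq_one hp χ hχ hcomm hcard hn j hj1, if_pos hj1]
        ring
      · have hj0 : j = 0 := by omega
        subst hj0
        have : ∑ g : G, (if g ^ (p^0) = 1 then psiAux χ g else 0) = 1 := by
          have : ∀ g : G, (if g ^ (p^0) = 1 then psiAux χ g else 0)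
              = (if g = 1 then psiAux χ g else 0) := by
            intro g
            refine if_congr ?_ rfl rfl
            rw [pow_zero, pow_one]
          rw [Finset.sum_congr rfl fun g _ => this g,
            Finset.sum_ite_eq' Finset.univ (1:G) (psiAux χ), if_pos (Finset.mem_univ _), psiAux_one]
        rw [this]
        simp
    rw [Finset.sum_congr rfl hinner]
    have : ∑ j ∈ Finset.range (n+1), (if 1 ≤ j then -(((p:ℂ)-1)*(p:ℂ)^(n-j)) else 0)
        = -∑ j ∈ Finset.range (n+1), (if 1 ≤ j then ((p:ℂ)-1)*(p:ℂ)^(n-j) else 0) := by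
      rw [← Finset.sum_neg_distrib]
      exact Finset.sum_congr rfl fun j _ => by by_cases h : 1 ≤ j <;> simp [h]
    rw [this, geomAux (p:ℂ) n 1 hn]
    have hnn : n - 1 + 1 = n := by omega
    rw [hnn]
    ring
  -- put it together
  unfold innerCF
  rw [Finset.sum_congr rfl fun g _ => by rw [hind g]]
  have hsplit : ∑ g : G, (starRingEnd ℂ) ((χ g : ℂ)) * δ g
      = psiAux χ 1 * δ 1 + ∑ g ∈ Finset.univ.erase (1:G), psiAux χ g * δ g := by
    rw [Finset.add_sum_erase Finset.univ (fun g => psiAux χ g * δ g) (Finset.mem_univ (1:G))]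
    exact Finset.sum_congr rfl fun g _ => by simp [psiAux]
  rw [hsplit, psiAux_one, one_mul, hδ1]
  have hrest : ∑ g ∈ Finset.univ.erase (1:G), psiAux χ g * δ g
      = (-1/((p:ℂ)-1)) * ∑ g ∈ Finset.univ.erase (1:G),
          psiAux χ g * (p:ℂ)^(n - (orderOf g).factorization p + 1) := by
    rw [Finset.mul_sum]
    refine Finset.sum_congr rfl fun g hg => ?_
    rw [hδg g (Finset.ne_of_mem_erase hg)]
    field_simp
  rw [hrest, hM, hcGf]
  field_simp
  done
end Delta


section TreeAux

set_option linter.unusedSectionVars false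
set_option maxHeartbeats 1000000

open Classical

namespace MetricRootedTree

variable (T : MetricRootedTree)

lemma iterate_root_aux (k : ℕ) : T.parent^[k] T.root = T.root :=
  Function.iterate_fixed T.parent_root k

lemma iterate_root_mono {N M : ℕ} {v : T.V} (h : T.parent^[N] v = T.root) (hNM : N ≤ M) :
    T.parent^[M] v = T.root := by
  obtain ⟨d, rfl⟩ := Nat.exists_eq_add_of_le hNM
  rw [Nat.add_comm, Function.iterate_add_apply, h, iterate_root_aux]

lemma no_cycle {v : T.V} {m : ℕ} (hv : v ≠ T.root) (hm : 0 < m) : T.parent^[m] v ≠ v := by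
  intro hcyc
  obtain ⟨N, hN⟩ := T.reaches_root v
  have hiter : ∀ k : ℕ, T.parent^[k * m] v = v := by
    intro k
    induction k with
    | zero => simp
    | succ k ih => rw [Nat.succ_mul, Function.iterate_add_apply, hcyc, ih]
  have h1 : T.parent^[N * m] v = T.root :=
    T.iterate_root_mono hN (Nat.le_mul_of_pos_right N hm)
  rw [hiter N] at h1
  exact hv h1

lemma parent_ne' {v : T.V} (hv : v ≠ T.root) : T.parent v ≠ v := by
  intro h
  exact T.no_cycle hv Nat.one_pos (by simpa using h)

lemma le_refl' (v : T.V) : T.le v v := ⟨0, rfl⟩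

lemma le_trans' {v w u : T.V} (h1 : T.le v w) (h2 : T.le w u) : T.le v u := by
  obtain ⟨a, ha⟩ := h1; obtain ⟨b, hb⟩ := h2
  exact ⟨a + b, by rw [Function.iterate_add_apply, hb, ha]⟩

lemma le_of_parent {w v : T.V} (h : T.parent w = v) : T.le v w :=
  ⟨1, by simpa using h⟩

lemma eq_root_of_le_root {v : T.V} (h : T.le v T.root) : v = T.root := by
  obtain ⟨m, hm⟩ := h
  rw [T.iterate_root_aux] at hm
  exact hm.symm

lemma le_step {v w : T.V} (h : T.le v w) : v = w ∨ T.le v (T.parent w) := by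
  obtain ⟨m, hm⟩ := h
  cases m with
  | zero => exact Or.inl hm.symm
  | succ m => exact Or.inr ⟨m, by rw [← Function.iterate_succ_apply]; exact hm⟩

lemma le_step' {v w : T.V} (h : T.le v (T.parent w)) : T.le v w := by
  obtain ⟨m, hm⟩ := h
  exact ⟨m + 1, by rw [Function.iterate_succ_apply]; exact hm⟩

lemma not_le_parent {v : T.V} (hv : v ≠ T.root) : ¬ T.le v (T.parent v) := by
  rintro ⟨m, hm⟩
  exact T.no_cycle hv (Nat.succ_pos m) (by rw [Function.iterate_succ_apply]; exact hm)

lemma le_total_ancestors {w₁ w₂ b : T.V} (h1 : T.le w₁ b) (h2 : T.le w₂ b) :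
    T.le w₁ w₂ ∨ T.le w₂ w₁ := by
  obtain ⟨m₁, hm₁⟩ := h1; obtain ⟨m₂, hm₂⟩ := h2
  rcases Nat.le_total m₁ m₂ with h | h
  · right
    obtain ⟨d, rfl⟩ := Nat.exists_eq_add_of_le h
    refine ⟨d, ?_⟩
    rw [← hm₁, ← Function.iterate_add_apply, Nat.add_comm d m₁, hm₂]
  · left
    obtain ⟨d, rfl⟩ := Nat.exists_eq_add_of_le h
    refine ⟨d, ?_⟩
    rw [← hm₂, ← Function.iterate_add_apply, Nat.add_comm d m₂, hm₁]

lemma child_exists {v : T.V} : ∀ (m : ℕ) (b' : T.V), T.parent^[m] b' = v → b' ≠ v →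
    ∃ w, T.parent w = v ∧ w ≠ v ∧ T.le w b' := by
  intro m
  induction m with
  | zero => intro b' hm hne; exact absurd hm hne
  | succ m ih =>
    intro b' hm hne
    by_cases hcase : T.parent^[m] b' = v
    · exact ih b' hcase hne
    · refine ⟨T.parent^[m] b', ?_, hcase, ⟨m, rfl⟩⟩
      rw [Function.iterate_succ_apply'] at hm
      exact hm

lemma sibling_eq {v w₁ w₂ : T.V} (hv : v ≠ T.root) (hp₁ : T.parent w₁ = v) (hne₁ : w₁ ≠ v)
    (hp₂ : T.parent w₂ = v) (hne₂ : w₂ ≠ v) (hle : T.le w₂ w₁) : w₁ = w₂ := by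
  obtain ⟨j, hj⟩ := hle
  cases j with
  | zero => simpa using hj
  | succ j =>
    rw [Function.iterate_succ_apply, hp₁] at hj
    cases j with
    | zero => exact absurd (by simpa using hj.symm) hne₂
    | succ j =>
      exfalso
      exact T.no_cycle hv (Nat.succ_pos (j+1))
        (show T.parent^[j+1+1] v = v by rw [Function.iterate_succ_apply', hj, hp₂])

open Classical in
noncomputable def pathTo (w : T.V) : Finset T.V :=
  Finset.univ.filter (fun v => T.le v w ∧ v ≠ T.root)

lemma mem_pathTo {v w : T.V} : v ∈ T.pathTo w ↔ T.le v w ∧ v ≠ T.root := by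
  unfold pathTo
  simp

lemma pathTo_root : T.pathTo T.root = ∅ := by
  refine Finset.eq_empty_iff_forall_notMem.mpr fun v hv => ?_
  obtain ⟨hle, hne⟩ := T.mem_pathTo.mp hv
  exact hne (T.eq_root_of_le_root hle)

lemma notMem_pathTo_parent {w : T.V} (hw : w ≠ T.root) : w ∉ T.pathTo (T.parent w) := by
  rw [mem_pathTo]
  rintro ⟨hle, -⟩
  exact T.not_le_parent hw hle

lemma pathTo_step {w : T.V} (hw : w ≠ T.root) :
    T.pathTo w = insert w (T.pathTo (T.parent w)) := by
  ext v
  rw [mem_pathTo, Finset.mem_insert, mem_pathTo]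
  constructor
  · rintro ⟨hle, hne⟩
    rcases T.le_step hle with rfl | h
    · exact Or.inl rfl
    · exact Or.inr ⟨h, hne⟩
  · rintro (rfl | ⟨hle, hne⟩)
    · exact ⟨T.le_refl' v, hw⟩
    · exact ⟨T.le_step' hle, hne⟩

lemma mem_leaves_iff {v : T.V} : v ∈ T.leaves ↔ T.IsLeaf v := by
  unfold leaves
  simp

lemma density_swap (b : T.V) :
    T.density T.leaves b = ∑ v ∈ T.pathTo b,
      T.eps v * (((T.leaves.erase b).filter (fun b' => T.le v b')).card : ℚ) := by
  unfold density idist pathTo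
  calc ∑ b' ∈ T.leaves.erase b,
        ∑ v ∈ Finset.univ.filter (fun v => T.le v b ∧ T.le v b' ∧ v ≠ T.root), T.eps v
      = ∑ b' ∈ T.leaves.erase b, ∑ v : T.V,
          (if (T.le v b ∧ v ≠ T.root) ∧ T.le v b' then T.eps v else 0) := by
        refine Finset.sum_congr rfl fun b' _ => ?_
        rw [Finset.sum_filter]
        exact Finset.sum_congr rfl fun v _ => if_congr (by tauto) rfl rfl
    _ = ∑ v : T.V, ∑ b' ∈ T.leaves.erase b,
          (if (T.le v b ∧ v ≠ T.root) ∧ T.le v b' then T.eps v else 0) := Finset.sum_comm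
    _ = ∑ v : T.V, (if T.le v b ∧ v ≠ T.root then
          T.eps v * (((T.leaves.erase b).filter (fun b' => T.le v b')).card : ℚ) else 0) := by
        refine Finset.sum_congr rfl fun v _ => ?_
        by_cases hC : T.le v b ∧ v ≠ T.root
        · rw [if_pos hC]
          have hrw : ∀ b' ∈ T.leaves.erase b,
              (if (T.le v b ∧ v ≠ T.root) ∧ T.le v b' then T.eps v else 0)
              = (if T.le v b' then T.eps v else 0) :=
            fun b' _ => if_congr (and_iff_right hC) rfl rfl
          rw [Finset.sum_congr rfl hrw, ← Finset.sum_filter, Finset.sum_const,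
            nsmul_eq_mul, mul_comm]
        · rw [if_neg hC]
          exact Finset.sum_eq_zero fun b' _ => if_neg (fun h => hC h.1)
    _ = ∑ v ∈ Finset.univ.filter (fun v => T.le v b ∧ v ≠ T.root),
          T.eps v * (((T.leaves.erase b).filter (fun b' => T.le v b')).card : ℚ) :=
        (Finset.sum_filter _ _).symm

lemma card_filter_erase {b v : T.V} (hb : b ∈ T.leaves) (hle : T.le v b) :
    ((T.leaves.erase b).filter (fun b' => T.le v b')).card + 1
      = (T.leaves.filter (fun b' => T.le v b')).card := by
  have hbmem : b ∈ T.leaves.filter (fun b' => T.le v b') := Finset.mem_filter.mpr ⟨hb, hle⟩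
  rw [Finset.filter_erase]
  exact Finset.card_erase_add_one hbmem

end MetricRootedTree

namespace HurwitzTree

variable {G : Type} [Group G] [Fintype G] {p : ℕ} (T : HurwitzTree G p)

lemma telescope : ∀ (k : ℕ) (w : T.V), T.parent^[k] w = T.root → ∀ g : G,
    T.dv w g = T.dv T.root g + ∑ v ∈ T.toMetricRootedTree.pathTo w,
      (T.eps v : ℂ) * (T.av v g - indAug (T.Gv v) g) := by
  intro k
  induction k with
  | zero =>
    intro w hw g
    have : w = T.root := by simpa using hw
    subst this
    rw [MetricRootedTree.pathTo_root, Finset.sum_empty, add_zero]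
  | succ k ih =>
    intro w hw g
    by_cases hroot : w = T.root
    · subst hroot
      rw [MetricRootedTree.pathTo_root, Finset.sum_empty, add_zero]
    · have hw' : T.parent^[k] (T.parent w) = T.root := by
        rw [← Function.iterate_succ_apply]; exact hw
      have hstep := congrFun (T.h4 w hroot) g
      rw [hstep, ih (T.parent w) hw' g,
        T.toMetricRootedTree.pathTo_step hroot,
        Finset.sum_insert (T.toMetricRootedTree.notMem_pathTo_parent hroot)]
      ring

lemma Gv_top_iter (hcomm : ∀ a b : G, a * b = b * a) {b : T.V} (hGb : T.Gv b = ⊤) :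
    ∀ k : ℕ, T.Gv (T.parent^[k] b) = ⊤ := by
  intro k
  induction k with
  | zero => simpa using hGb
  | succ k ih =>
    rw [Function.iterate_succ_apply']
    set v := T.parent^[k] b with hv
    by_cases hroot : v = T.root
    · rw [hroot, T.parent_root]
      exact T.h1_root
    · have hne : v ≠ T.parent v := fun h => T.toMetricRootedTree.parent_ne' hroot h.symm
      obtain ⟨g, hg⟩ := T.h1_sub (T.parent v) v rfl hne
      rw [eq_top_iff]
      intro x _
      have hx : x ∈ T.Gv v := by rw [ih]; trivial
      have hmem := hg x hx
      have hgx : g * x * g⁻¹ = x := by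
        rw [hcomm g x, mul_assoc]
        simp
      rwa [hgx] at hmem

lemma Gv_top_of_le (hcomm : ∀ a b : G, a * b = b * a) {b v : T.V} (hGb : T.Gv b = ⊤)
    (hle : T.toMetricRootedTree.le v b) : T.Gv v = ⊤ := by
  obtain ⟨k, hk⟩ := hle
  rw [← hk]
  exact T.Gv_top_iter hcomm hGb k

lemma artin_decomp : ∀ (N : ℕ) (v : T.V),
    (Finset.univ.filter (fun u => T.toMetricRootedTree.le v u)).card ≤ N → v ≠ T.root →
    ∀ g : G, T.av v g = ∑ b' ∈ T.toMetricRootedTree.leaves.filter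
        (fun b' => T.toMetricRootedTree.le v b'), indAug (T.Gv b') g := by
  intro N
  induction N with
  | zero =>
    intro v hcard hv g
    exfalso
    have hvmem : v ∈ Finset.univ.filter (fun u => T.toMetricRootedTree.le v u) :=
      Finset.mem_filter.mpr ⟨Finset.mem_univ v, T.toMetricRootedTree.le_refl' v⟩
    have := Finset.card_pos.mpr ⟨v, hvmem⟩
    omega
  | succ N ih =>
    intro v hcard hv g
    by_cases hleaf : T.toMetricRootedTree.IsLeaf v
    · have hset : T.toMetricRootedTree.leaves.filter
          (fun b' => T.toMetricRootedTree.le v b') = {v} := by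
        ext b'
        rw [Finset.mem_filter, Finset.mem_singleton, T.toMetricRootedTree.mem_leaves_iff]
        constructor
        · rintro ⟨hbleaf, hle⟩
          by_contra hne
          obtain ⟨m, hm⟩ := hle
          obtain ⟨w, hw1, hw2, _⟩ := T.toMetricRootedTree.child_exists m b' hm hne
          exact hw2 (hleaf.2 w hw1)
        · rintro rfl
          exact ⟨hleaf, T.toMetricRootedTree.le_refl' _⟩
      rw [hset, Finset.sum_singleton, T.h3_leaf v hleaf]
    · have hs := congrFun (T.h3_inner v hv hleaf) g
      rw [hs]
      have hchild : ∀ w ∈ T.toMetricRootedTree.children v, T.parent w = v ∧ w ≠ v := by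
        intro w hw
        unfold MetricRootedTree.children at hw
        simpa using hw
      have hrec : ∀ w ∈ T.toMetricRootedTree.children v,
          T.av w g = ∑ b' ∈ T.toMetricRootedTree.leaves.filter
            (fun b' => T.toMetricRootedTree.le w b'), indAug (T.Gv b') g := by
        intro w hw
        obtain ⟨hp, hne⟩ := hchild w hw
        have hwroot : w ≠ T.root := by
          intro h
          apply hv
          rw [← hp, h, T.parent_root]
        refine ih w ?_ hwroot g
        have hsub : Finset.univ.filter (fun u => T.toMetricRootedTree.le w u) ⊆
            (Finset.univ.filter (fun u => T.toMetricRootedTree.le v u)).erase v := by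
          intro u hu
          rw [Finset.mem_filter] at hu
          rw [Finset.mem_erase, Finset.mem_filter]
          refine ⟨?_, Finset.mem_univ u,
            T.toMetricRootedTree.le_trans' (T.toMetricRootedTree.le_of_parent hp) hu.2⟩
          rintro rfl
          obtain ⟨m, hm⟩ := hu.2
          exact T.toMetricRootedTree.no_cycle hv (Nat.succ_pos m)
            (show T.parent^[m+1] u = u by rw [Function.iterate_succ_apply', hm, hp])
        have hvmem : v ∈ Finset.univ.filter (fun u => T.toMetricRootedTree.le v u) :=
          Finset.mem_filter.mpr ⟨Finset.mem_univ v, T.toMetricRootedTree.le_refl' v⟩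
        have hle1 := Finset.card_le_card hsub
        rw [Finset.card_erase_of_mem hvmem] at hle1
        omega
      rw [Finset.sum_congr rfl hrec]
      have hdisj : (↑(T.toMetricRootedTree.children v) : Set T.V).PairwiseDisjoint
          (fun w => T.toMetricRootedTree.leaves.filter
            (fun b' => T.toMetricRootedTree.le w b')) := by
        intro w₁ hw₁ w₂ hw₂ hne
        obtain ⟨hp₁, hne₁⟩ := hchild w₁ (Finset.mem_coe.mp hw₁)
        obtain ⟨hp₂, hne₂⟩ := hchild w₂ (Finset.mem_coe.mp hw₂)
        refine Finset.disjoint_left.mpr fun b' hb1 hb2 => ?_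
        rw [Finset.mem_filter] at hb1 hb2
        rcases T.toMetricRootedTree.le_total_ancestors hb1.2 hb2.2 with h | h
        · exact hne (T.toMetricRootedTree.sibling_eq hv hp₂ hne₂ hp₁ hne₁ h).symm
        · exact hne (T.toMetricRootedTree.sibling_eq hv hp₁ hne₁ hp₂ hne₂ h)
      have hcover : T.toMetricRootedTree.leaves.filter
            (fun b' => T.toMetricRootedTree.le v b')
          = (T.toMetricRootedTree.children v).biUnion
              (fun w => T.toMetricRootedTree.leaves.filter
                (fun b' => T.toMetricRootedTree.le w b')) := by
        ext b'
        rw [Finset.mem_biUnion, Finset.mem_filter]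
        constructor
        · rintro ⟨hbl, hle⟩
          have hbne : b' ≠ v := by
            rintro rfl
            exact hleaf (T.toMetricRootedTree.mem_leaves_iff.mp hbl)
          obtain ⟨m, hm⟩ := hle
          obtain ⟨w, hw1, hw2, hw3⟩ := T.toMetricRootedTree.child_exists m b' hm hbne
          refine ⟨w, ?_, Finset.mem_filter.mpr ⟨hbl, hw3⟩⟩
          unfold MetricRootedTree.children
          exact Finset.mem_filter.mpr ⟨Finset.mem_univ w, hw1, hw2⟩
        · rintro ⟨w, hw, hb'⟩
          rw [Finset.mem_filter] at hb'
          obtain ⟨hp, hne⟩ := hchild w hw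
          exact ⟨hb'.1,
            T.toMetricRootedTree.le_trans' (T.toMetricRootedTree.le_of_parent hp) hb'.2⟩
      rw [hcover, Finset.sum_biUnion hdisj]

end HurwitzTree

section InnerTel

set_option linter.unusedSectionVars false

variable {G : Type} [Group G] [Fintype G]

lemma innerCF_telescope {ι : Type*} (χf : G → ℂ) (f : G → ℂ) (s : Finset ι) (c : ι → ℂ)
    (A B : ι → G → ℂ) :
    innerCF χf (fun g => f g + ∑ i ∈ s, c i * (A i g - B i g))
      = innerCF χf f + ∑ i ∈ s, c i * (innerCF χf (A i) - innerCF χf (B i)) := by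
  unfold innerCF
  calc (Fintype.card G : ℂ)⁻¹ * ∑ g : G, (starRingEnd ℂ) (χf g) *
        (f g + ∑ i ∈ s, c i * (A i g - B i g))
      = (Fintype.card G : ℂ)⁻¹ * ∑ g : G, ((starRingEnd ℂ) (χf g) * f g
          + ∑ i ∈ s, c i * ((starRingEnd ℂ) (χf g) * A i g - (starRingEnd ℂ) (χf g) * B i g)) := by
        congr 1
        refine Finset.sum_congr rfl fun g _ => ?_
        rw [mul_add, Finset.mul_sum]
        congr 1
        exact Finset.sum_congr rfl fun i _ => by ring
    _ = (Fintype.card G : ℂ)⁻¹ * (∑ g : G, (starRingEnd ℂ) (χf g) * f g)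
          + ∑ i ∈ s, c i * ((Fintype.card G : ℂ)⁻¹ *
            ∑ g : G, ((starRingEnd ℂ) (χf g) * A i g - (starRingEnd ℂ) (χf g) * B i g)) := by
        rw [Finset.sum_add_distrib, mul_add]
        congr 1
        rw [Finset.sum_comm, Finset.mul_sum]
        refine Finset.sum_congr rfl fun i _ => ?_
        rw [← Finset.mul_sum]
        ring
    _ = (Fintype.card G : ℂ)⁻¹ * (∑ g : G, (starRingEnd ℂ) (χf g) * f g)
          + ∑ i ∈ s, c i * ((Fintype.card G : ℂ)⁻¹ * ∑ g : G, (starRingEnd ℂ) (χf g) * A i g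
            - (Fintype.card G : ℂ)⁻¹ * ∑ g : G, (starRingEnd ℂ) (χf g) * B i g) := by
        congr 1
        refine Finset.sum_congr rfl fun i _ => ?_
        rw [Finset.sum_sub_distrib]
        ring

end InnerTel

end TreeAux

open Classical in
/-- For a Hurwitz tree `T` of type `(G,p)` with `G` cyclic of order `p^n`, a leaf `b`
with `G_b = G` and a faithful irreducible character `χ` of `G`:
`d(B,b) = (np - n + 1)/(p-1) - δ_T(χ)`. -/
theorem stmt13 (G : Type) [Group G] [Fintype G] (p n : ℕ) (hp : p.Prime)
    (hG : IsCyclic G) (hcard : Nat.card G = p ^ n) (hn : 0 < n)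
    (T : HurwitzTree G p) (b : T.V) (hb : T.toMetricRootedTree.IsLeaf b)
    (hGb : T.Gv b = ⊤)
    (χ : G →* ℂˣ) (hχ : Function.Injective χ) :
    (T.toMetricRootedTree.density T.toMetricRootedTree.leaves b : ℂ) =
      ((n * p : ℂ) - n + 1) / ((p : ℂ) - 1) -
        innerCF (fun g => (χ g : ℂ)) T.depth := by
  have hcomm : ∀ a b : G, a * b = b * a := by
    obtain ⟨σ, hσ⟩ := hG
    intro a b
    obtain ⟨i, hi⟩ := Subgroup.mem_zpowers_iff.mp (hσ a)
    obtain ⟨j, hj⟩ := Subgroup.mem_zpowers_iff.mp (hσ b)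
    rw [← hi, ← hj, ← zpow_add, ← zpow_add, add_comm]
  have hnt : Nontrivial G := by
    have h1 : 1 < Nat.card G := by
      rw [hcard]; exact Nat.one_lt_pow hn.ne' hp.one_lt
    rw [Nat.card_eq_fintype_card] at h1
    exact Fintype.one_lt_card_iff_nontrivial.mp h1
  have htopbot : (⊤ : Subgroup G) ≠ ⊥ := by
    intro h
    obtain ⟨x, y, hxy⟩ := hnt
    have hx : x ∈ (⊤ : Subgroup G) := trivial
    have hy : y ∈ (⊤ : Subgroup G) := trivial
    rw [h, Subgroup.mem_bot] at hx hy
    exact hxy (hx.trans hy.symm)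
  set χf : G → ℂ := fun g => (χ g : ℂ) with hχf
  -- the value of δ_b
  have hPtop : IsPGroup p (⊤ : Subgroup G) := by
    apply IsPGroup.of_card (n := n)
    rw [← hcard]
    exact Subgroup.card_top
  have hdvb : T.dv b = indCF ⊤ (deltaMultSub p ⊤) :=
    T.h5 b hb ⊤ (by rw [hGb]) hPtop (fun Q _ _ => le_top)
  have hδval : innerCF χf (T.dv b) = ((n * p : ℂ) - n + 1) / ((p : ℂ) - 1) := by
    rw [hdvb]
    exact innerCF_deltaTop hp χ hχ hcomm hcard hn
  -- telescoping along the path from the root to b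
  obtain ⟨N, hN⟩ := T.reaches_root b
  have htelF : T.dv b = fun g => T.dv T.root g + ∑ v ∈ T.toMetricRootedTree.pathTo b,
      (T.eps v : ℂ) * (T.av v g - indAug (T.Gv v) g) :=
    funext fun g => T.telescope N b hN g
  have hinner1 : innerCF χf (T.dv b) = innerCF χf (T.dv T.root)
      + ∑ v ∈ T.toMetricRootedTree.pathTo b, (T.eps v : ℂ)
          * (innerCF χf (T.av v) - innerCF χf (indAug (T.Gv v))) := by
    rw [congrArg (innerCF χf) htelF]
    exact innerCF_telescope χf (T.dv T.root) (T.toMetricRootedTree.pathTo b)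
      (fun v => (T.eps v : ℂ)) (fun v => T.av v) (fun v => indAug (T.Gv v))
  -- each term of the sum
  have hbleaves : b ∈ T.toMetricRootedTree.leaves :=
    T.toMetricRootedTree.mem_leaves_iff.mpr hb
  have hterm : ∀ v ∈ T.toMetricRootedTree.pathTo b,
      innerCF χf (T.av v) - innerCF χf (indAug (T.Gv v))
        = (((T.toMetricRootedTree.leaves.erase b).filter
            (fun b' => T.toMetricRootedTree.le v b')).card : ℂ) := by
    intro v hv
    obtain ⟨hle, hvroot⟩ := T.toMetricRootedTree.mem_pathTo.mp hv
    -- the Artin character term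
    have hartinF : T.av v = fun g => ∑ b' ∈ T.toMetricRootedTree.leaves.filter
        (fun b' => T.toMetricRootedTree.le v b'), indAug (T.Gv b') g :=
      funext fun g => T.artin_decomp
        (Finset.univ.filter (fun u => T.toMetricRootedTree.le v u)).card v le_rfl hvroot g
    have hav : innerCF χf (T.av v)
        = ((T.toMetricRootedTree.leaves.filter
            (fun b' => T.toMetricRootedTree.le v b')).card : ℂ) := by
      rw [congrArg (innerCF χf) hartinF]
      rw [innerCF_fun_sum χf (T.toMetricRootedTree.leaves.filter
        (fun b' => T.toMetricRootedTree.le v b')) (fun b' => indAug (T.Gv b'))]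
      have hone : ∀ b' ∈ T.toMetricRootedTree.leaves.filter
          (fun b' => T.toMetricRootedTree.le v b'),
          innerCF χf (indAug (T.Gv b')) = 1 := by
        intro b' hb'
        have hbl : T.toMetricRootedTree.IsLeaf b' :=
          T.toMetricRootedTree.mem_leaves_iff.mp (Finset.mem_filter.mp hb').1
        exact innerCF_indAug χ hχ hcomm (T.Gv b') (T.h2 b' hbl).1
      rw [Finset.sum_congr rfl hone, Finset.sum_const, nsmul_eq_mul, mul_one]
    have haug : innerCF χf (indAug (T.Gv v)) = 1 := by
      rw [T.Gv_top_of_le hcomm hGb hle]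
      exact innerCF_indAug χ hχ hcomm ⊤ htopbot
    rw [hav, haug]
    have hcount := T.toMetricRootedTree.card_filter_erase hbleaves hle
    have : ((T.toMetricRootedTree.leaves.filter
        (fun b' => T.toMetricRootedTree.le v b')).card : ℂ)
        = (((T.toMetricRootedTree.leaves.erase b).filter
            (fun b' => T.toMetricRootedTree.le v b')).card : ℂ) + 1 := by
      rw [← hcount]
      push_cast
      ring
    rw [this]
    ring
  have hinner2 : innerCF χf (T.dv b) = innerCF χf (T.dv T.root)
      + ∑ v ∈ T.toMetricRootedTree.pathTo b, (T.eps v : ℂ)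
          * (((T.toMetricRootedTree.leaves.erase b).filter
              (fun b' => T.toMetricRootedTree.le v b')).card : ℂ) := by
    rw [hinner1]
    congr 1
    exact Finset.sum_congr rfl fun v hv => by rw [hterm v hv]
  -- the density
  have hdens : (T.toMetricRootedTree.density T.toMetricRootedTree.leaves b : ℂ)
      = ∑ v ∈ T.toMetricRootedTree.pathTo b, (T.eps v : ℂ)
          * (((T.toMetricRootedTree.leaves.erase b).filter
              (fun b' => T.toMetricRootedTree.le v b')).card : ℂ) := by
    rw [T.toMetricRootedTree.density_swap b]
    push_cast
    rfl
  have hdepth : T.depth = T.dv T.root := rfl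
  rw [hdepth, hdens]
  linear_combination hδval - hinner2
end

section
/- Let G = Q_{2^{n+1}} (n ≥ 2), H₀ = ⟨τ⟩, and let χ : H₀ → ℂ^× be a faithful irreducible character. Let ψ = Ind_{H₀}^G χ. Then for every nontrivial cyclic subgroup C ⊆ G, the restriction ψ|_C is a sum of two nontrivial irreducible characters of C; in particular ⟨ψ|_C, u_C⟩ = 2, i.e., ⟨ψ, (u_C)^*⟩_G = 2. -/
open Subgroup

section Characters

variable {G : Type} [Group G] [Fintype G]

open Classical in
/-- Extension by zero of a character of a subgroup. -/
noncomputable def zeroExt (H : Subgroup G) (χ : H →* ℂˣ) : G → ℂ :=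
  fun g => if h : g ∈ H then (χ ⟨g, h⟩ : ℂ) else 0

end Characters

/-! The induced character `ψ = Ind_{⟨a⟩}^Q χ` is `ψ g = χ g + χ g⁻¹` on `⟨a⟩` and vanishes on the
elements `xa i`. A cyclic `C ≤ ⟨a⟩` therefore has `ψ|_C = χ|_C + χ⁻¹|_C`. A cyclic `C` not inside
`⟨a⟩` is generated by some `xa i` of order `4`, whose square is the central involution `a m`;
a faithful `χ` is `-1` there, so `ψ` takes the values `2, 0, -2, 0` on `1, xa i, xa i ^ 2, xa i ^ 3`,
which is `λ + λ⁻¹` for the character `λ` of `C` sending `xa i` to `I`. In both cases `ψ|_C` is a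
sum of two nontrivial linear characters, so its sum over `C` vanishes, and Frobenius reciprocity
gives `⟨ψ, Ind_C^Q (r_C - 1_C)⟩ = ψ 1 - |C|⁻¹ ∑_{c ∈ C} ψ c = 2`. -/

open Subgroup Finset ComplexConjugate

section ClassFunctions

variable {G : Type} [Group G]

theorem zeroExt_of_mem {H : Subgroup G} (χ : H →* ℂˣ) {g : G} (hg : g ∈ H) :
    zeroExt H χ g = χ ⟨g, hg⟩ :=
  dif_pos hg

theorem zeroExt_one (H : Subgroup G) (χ : H →* ℂˣ) : zeroExt H χ 1 = 1 := by
  rw [zeroExt_of_mem χ H.one_mem]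
  exact congrArg Units.val (map_one χ)

variable [Fintype G]

theorem indCF_conj (H : Subgroup G) (f : G → ℂ) (x g : G) :
    indCF H f (x * g * x⁻¹) = indCF H f g := by
  unfold indCF
  congr 1
  exact Fintype.sum_equiv (Equiv.mulLeft x⁻¹) _ _ fun y => by simp [mul_assoc]

/-- Frobenius reciprocity. -/
theorem innerCF_indCF (ψ : G → ℂ) (hψ : ∀ x g, ψ (x * g * x⁻¹) = ψ g) (H : Subgroup G)
    (f : G → ℂ) :
    innerCF ψ (indCF H f) = (Nat.card H : ℂ)⁻¹ * ∑ g, conj (ψ g) * f g := by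
  have hconj (x : G) : ∑ g, conj (ψ g) * f (x⁻¹ * g * x) = ∑ g, conj (ψ g) * f g :=
    Fintype.sum_equiv (MulAut.conj x⁻¹).toEquiv _ _ fun g => by
      rw [MulEquiv.toEquiv_eq_coe, EquivLike.coe_coe, MulAut.conj_apply, hψ, inv_inv]
  have hG : (Fintype.card G : ℂ) ≠ 0 := Nat.cast_ne_zero.mpr Fintype.card_ne_zero
  calc innerCF ψ (indCF H f)
      = (Fintype.card G : ℂ)⁻¹ * (Nat.card H : ℂ)⁻¹ *
          ∑ x, ∑ g, conj (ψ g) * f (x⁻¹ * g * x) := by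
        simp only [innerCF, indCF, mul_sum, mul_left_comm _ (Nat.card H : ℂ)⁻¹, mul_assoc]
        rw [sum_comm]
    _ = _ := by
        simp only [hconj, sum_const, card_univ, nsmul_eq_mul]
        field_simp

theorem sum_mul_augChar (φ : G → ℂ) (H : Subgroup G) [Fintype H] :
    ∑ g, φ g * augChar H g = Nat.card H * φ 1 - ∑ h : H, φ h := by
  classical
  have hsplit (g : G) : augChar H g =
      (if g = 1 then (Nat.card H : ℂ) else 0) - (if g ∈ H then 1 else 0) := by
    by_cases hg : g ∈ H
    · by_cases h1 : g = 1 <;> simp [augChar, hg, h1]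
    · have h1 : g ≠ 1 := fun h => hg (h ▸ H.one_mem)
      simp [augChar, hg, h1]
  simp only [hsplit, mul_sub, mul_ite, mul_one, mul_zero, sum_sub_distrib, sum_ite_eq',
    mem_univ, if_true, ← sum_filter]
  rw [mul_comm]
  congr 1
  exact sum_subtype _ (by simp) φ

theorem innerCF_indAug_s15 (ψ : G → ℂ) (hψ : ∀ x g, ψ (x * g * x⁻¹) = ψ g) (H : Subgroup G)
    [Fintype H] :
    innerCF ψ (indAug H) = conj (ψ 1) - (Nat.card H : ℂ)⁻¹ * ∑ h : H, conj (ψ h) := by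
  have hH : (Nat.card H : ℂ) ≠ 0 := Nat.cast_ne_zero.mpr Nat.card_pos.ne'
  rw [indAug, innerCF_indCF ψ hψ, sum_mul_augChar (fun g => conj (ψ g))]
  field_simp

theorem sum_coe_monoidHom_eq_zero {K : Type*} [Group K] [Fintype K] {φ : K →* ℂˣ}
    (hφ : φ ≠ 1) : ∑ k, (φ k : ℂ) = 0 :=
  sum_hom_units_eq_zero ((Units.coeHom ℂ).comp φ) fun h =>
    hφ (MonoidHom.ext fun k => Units.ext (DFunLike.congr_fun h k))

theorem coe_apply_eq_neg_one_of_injective {K : Type*} [Group K] {φ : K →* ℂˣ}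
    (hφ : Function.Injective φ) {z : K} (hz2 : z ^ 2 = 1) (hz : z ≠ 1) : (φ z : ℂ) = -1 := by
  have hsq : (φ z : ℂ) * φ z = 1 := by
    rw [← Units.val_mul, ← map_mul, ← sq, hz2, map_one, Units.val_one]
  refine (mul_self_eq_one_iff.mp hsq).resolve_left fun h => hz (hφ ?_)
  rw [map_one]
  exact Units.ext h

end ClassFunctions

namespace QuaternionGroup

variable {m : ℕ}

theorem inv_a (i : ZMod (2 * m)) : (a i : QuaternionGroup m)⁻¹ = a (-i) := rfl

theorem inv_xa (i : ZMod (2 * m)) :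
    (xa i : QuaternionGroup m)⁻¹ = xa ((m : ZMod (2 * m)) + i) :=
  rfl

variable [NeZero m]

theorem a_mem_zpowers_a_one (i : ZMod (2 * m)) :
    (a i : QuaternionGroup m) ∈ zpowers (a 1) := by
  simpa using pow_mem (mem_zpowers (a 1 : QuaternionGroup m)) i.val

theorem xa_notMem_zpowers_a_one (i : ZMod (2 * m)) :
    (xa i : QuaternionGroup m) ∉ zpowers (a 1) := by
  rw [← mem_powers_iff_mem_zpowers]
  rintro ⟨k, hk⟩
  simp at hk

def sumEquiv : ZMod (2 * m) ⊕ ZMod (2 * m) ≃ QuaternionGroup m where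
  toFun := Sum.elim a xa
  invFun
    | a j => Sum.inl j
    | xa j => Sum.inr j
  left_inv := by rintro (j | j) <;> rfl
  right_inv := by rintro (j | j) <;> rfl

theorem sum_eq_sum_a_add_sum_xa (f : QuaternionGroup m → ℂ) :
    ∑ g, f g = ∑ i, f (a i) + ∑ i, f (xa i) := by
  rw [← sumEquiv.sum_comp, Fintype.sum_sum_type]
  rfl

variable (χ : zpowers (a 1 : QuaternionGroup m) →* ℂˣ)

theorem zeroExt_xa (i : ZMod (2 * m)) : zeroExt _ χ (xa i) = 0 :=
  dif_neg (xa_notMem_zpowers_a_one i)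

theorem indCF_zeroExt_apply (g : QuaternionGroup m) :
    indCF (zpowers (a 1)) (zeroExt _ χ) g = zeroExt _ χ g + zeroExt _ χ g⁻¹ := by
  have hcard :
      (Nat.card (zpowers (a 1 : QuaternionGroup m)) : ℂ) = Fintype.card (ZMod (2 * m)) := by
    rw [Nat.card_zpowers, orderOf_a_one, ZMod.card]
  have hne : (Fintype.card (ZMod (2 * m)) : ℂ) ≠ 0 := Nat.cast_ne_zero.mpr Fintype.card_ne_zero
  rw [indCF, hcard, sum_eq_sum_a_add_sum_xa]
  cases g with
  | a k =>
    have hconj_a (i : ZMod (2 * m)) : (a i)⁻¹ * a k * a i = a k := by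
      simp only [inv_a, a_mul_a]; ring_nf
    have hconj_xa (i : ZMod (2 * m)) : (xa i)⁻¹ * a k * xa i = (a k)⁻¹ := by
      simp only [inv_a, inv_xa, xa_mul_a, xa_mul_xa]; ring_nf
    simp only [hconj_a, hconj_xa, sum_const, card_univ, nsmul_eq_mul]
    field_simp
  | xa k =>
    simp [inv_a, inv_xa, zeroExt_xa]

theorem indCF_zeroExt_one : indCF (zpowers (a 1)) (zeroExt _ χ) 1 = 2 := by
  rw [indCF_zeroExt_apply, inv_one, zeroExt_one]
  norm_num

theorem indCF_zeroExt_xa (i : ZMod (2 * m)) :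
    indCF (zpowers (a 1)) (zeroExt _ χ) (xa i) = 0 := by
  rw [indCF_zeroExt_apply, inv_xa, zeroExt_xa, zeroExt_xa, add_zero]

theorem indCF_zeroExt_xa_sq (hχ : Function.Injective χ) (i : ZMod (2 * m)) :
    indCF (zpowers (a 1)) (zeroExt _ χ) (xa i ^ 2) = -2 := by
  have hmem : xa i ^ 2 ∈ zpowers (a 1 : QuaternionGroup m) := by
    rw [xa_sq]; exact a_mem_zpowers_a_one _
  have hsq : (⟨xa i ^ 2, hmem⟩ : zpowers (a 1 : QuaternionGroup m)) ^ 2 = 1 :=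
    Subtype.ext <| by
      simp only [SubgroupClass.coe_pow, OneMemClass.coe_one, ← pow_mul]; exact xa_pow_four i
  have hne : (⟨xa i ^ 2, hmem⟩ : zpowers (a 1 : QuaternionGroup m)) ≠ 1 := fun h =>
    pow_ne_one_of_lt_orderOf two_ne_zero (by simp) (congrArg Subtype.val h)
  have hinv : (xa i ^ 2)⁻¹ = xa i ^ 2 := inv_eq_of_mul_eq_one_right <| by
    rw [← pow_add]; exact xa_pow_four i
  rw [indCF_zeroExt_apply, hinv, zeroExt_of_mem χ hmem,
    coe_apply_eq_neg_one_of_injective hχ hsq hne]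
  norm_num

theorem indCF_zeroExt_xa_pow (hχ : Function.Injective χ) (i : ZMod (2 * m)) (k : ℕ) :
    indCF (zpowers (a 1)) (zeroExt _ χ) (xa i ^ k) = Complex.I ^ k + (Complex.I ^ k)⁻¹ := by
  rw [pow_eq_pow_mod k (xa_pow_four i), pow_eq_pow_mod k Complex.I_pow_four]
  have hk : k % 4 < 4 := Nat.mod_lt _ (by norm_num)
  generalize k % 4 = r at hk ⊢
  interval_cases r
  · norm_num [indCF_zeroExt_one]
  · simp [indCF_zeroExt_xa]
  · rw [indCF_zeroExt_xa_sq χ hχ, Complex.I_sq]; norm_num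
  · simp [pow_succ, indCF_zeroExt_xa]

theorem exists_indCF_zeroExt_eq_add_inv_of_le (hχ : Function.Injective χ)
    {C : Subgroup (QuaternionGroup m)} (hC : C ≠ ⊥) (hle : C ≤ zpowers (a 1)) :
    ∃ φ : C →* ℂˣ, φ ≠ 1 ∧
      ∀ c : C, indCF (zpowers (a 1)) (zeroExt _ χ) c = (φ c : ℂ) + (φ⁻¹ c : ℂ) := by
  obtain ⟨c₀, hc₀⟩ := ne_bot_iff_exists_ne_one.mp hC
  have hinj : Function.Injective (χ.comp (inclusion hle)) := hχ.comp (inclusion_injective hle)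
  refine ⟨χ.comp (inclusion hle), fun h => hc₀ (hinj ?_), fun c => ?_⟩
  · rw [h, map_one, MonoidHom.one_apply]
  · rw [indCF_zeroExt_apply, zeroExt_of_mem χ (hle c.2), zeroExt_of_mem χ (inv_mem (hle c.2))]
    rw [MonoidHom.inv_apply, ← map_inv]
    rfl

theorem exists_indCF_zeroExt_eq_add_inv_of_not_le (hχ : Function.Injective χ)
    {C : Subgroup (QuaternionGroup m)} [IsCyclic C] (hle : ¬C ≤ zpowers (a 1)) :
    ∃ φ : C →* ℂˣ, φ ≠ 1 ∧
      ∀ c : C, indCF (zpowers (a 1)) (zeroExt _ χ) c = (φ c : ℂ) + (φ⁻¹ c : ℂ) := by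
  obtain ⟨γ, hγ⟩ := IsCyclic.exists_generator (α := C)
  obtain ⟨i, hi⟩ : ∃ i, (γ : QuaternionGroup m) = xa i := by
    rcases hγa : (γ : QuaternionGroup m) with j | i
    · refine absurd (fun c hc => ?_) hle
      obtain ⟨k, hk⟩ := mem_zpowers_iff.mp (hγ ⟨c, hc⟩)
      have hc : (γ : QuaternionGroup m) ^ k = c := congrArg Subtype.val hk
      rw [← hc, hγa]
      exact zpow_mem (a_mem_zpowers_a_one j) k
    · exact ⟨i, rfl⟩
  set ζ : ℂˣ := Units.mk0 Complex.I Complex.I_ne_zero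
  have hζ : orderOf ζ ∣ orderOf γ := by
    rw [← orderOf_injective C.subtype C.subtype_injective γ, C.subtype_apply, hi, orderOf_xa]
    exact orderOf_dvd_of_pow_eq_one (Units.ext (by simp [ζ]))
  refine ⟨monoidHomOfForallMemZpowers hγ hζ, fun h => ?_, fun c => ?_⟩
  · have hγζ := monoidHomOfForallMemZpowers_apply_gen hγ hζ
    rw [h, MonoidHom.one_apply, Units.ext_iff] at hγζ
    simpa [ζ] using congrArg Complex.im hγζ
  · obtain ⟨k, rfl⟩ := mem_powers_iff_mem_zpowers.mpr (hγ c)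
    simp [monoidHomOfForallMemZpowers_apply_gen, hi, indCF_zeroExt_xa_pow χ hχ, ζ]

theorem exists_indCF_zeroExt_eq_add_inv (hχ : Function.Injective χ)
    {C : Subgroup (QuaternionGroup m)} [IsCyclic C] (hC : C ≠ ⊥) :
    ∃ φ : C →* ℂˣ, φ ≠ 1 ∧
      ∀ c : C, indCF (zpowers (a 1)) (zeroExt _ χ) c = (φ c : ℂ) + (φ⁻¹ c : ℂ) := by
  by_cases hle : C ≤ zpowers (a 1)
  · exact exists_indCF_zeroExt_eq_add_inv_of_le χ hχ hC hle
  · exact exists_indCF_zeroExt_eq_add_inv_of_not_le χ hχ hle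

end QuaternionGroup

theorem stmt15_general (n : ℕ)
    (χ : ↥(zpowers (QuaternionGroup.a 1 : QuaternionGroup (2 ^ (n - 1)))) →* ℂˣ)
    (hχ : Function.Injective χ)
    (C : Subgroup (QuaternionGroup (2 ^ (n - 1)))) (hC : C ≠ ⊥) (hcyc : IsCyclic C) :
    (∃ ψ₁ ψ₂ : ↥C →* ℂˣ, ψ₁ ≠ 1 ∧ ψ₂ ≠ 1 ∧
      ∀ c : ↥C,
        indCF (zpowers (QuaternionGroup.a 1)) (zeroExt _ χ) (c : QuaternionGroup (2 ^ (n - 1)))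
          = (ψ₁ c : ℂ) + (ψ₂ c : ℂ)) ∧
    innerCF (indCF (zpowers (QuaternionGroup.a 1)) (zeroExt _ χ)) (indAug C) = 2 := by
  obtain ⟨φ, hφ, hres⟩ := QuaternionGroup.exists_indCF_zeroExt_eq_add_inv χ hχ hC
  have hφinv : φ⁻¹ ≠ 1 := fun h =>
    hφ (MonoidHom.ext fun c => inv_eq_one.mp (DFunLike.congr_fun h c))
  refine ⟨⟨φ, φ⁻¹, hφ, hφinv, hres⟩, ?_⟩
  have : Fintype C := Fintype.ofFinite C
  have hsum : ∑ c : C, indCF (zpowers (QuaternionGroup.a 1)) (zeroExt _ χ) c = 0 := by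
    simp only [hres, sum_add_distrib, sum_coe_monoidHom_eq_zero hφ,
      sum_coe_monoidHom_eq_zero hφinv, add_zero]
  rw [innerCF_indAug_s15 _ (indCF_conj _ _) C, ← map_sum, hsum, QuaternionGroup.indCF_zeroExt_one,
    map_ofNat, map_zero, mul_zero, sub_zero]

/-- Let `G = Q_{2^{n+1}}` (`n ≥ 2`), `H₀ = ⟨τ⟩`, `χ : H₀ → ℂ^×` a faithful irreducible
character, and `ψ = Ind_{H₀}^G χ`.  Then for every nontrivial cyclic subgroup `C ⊆ G`,
the restriction `ψ|_C` is a sum of two nontrivial irreducible characters of `C`; in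
particular `⟨ψ, (u_C)^*⟩_G = 2`. -/
theorem stmt15 (n : ℕ) (hn : 2 ≤ n)
    (χ : ↥(zpowers (QuaternionGroup.a 1 : QuaternionGroup (2 ^ (n - 1)))) →* ℂˣ)
    (hχ : Function.Injective χ)
    (C : Subgroup (QuaternionGroup (2 ^ (n - 1)))) (hC : C ≠ ⊥) (hcyc : IsCyclic C) :
    (∃ ψ₁ ψ₂ : ↥C →* ℂˣ, ψ₁ ≠ 1 ∧ ψ₂ ≠ 1 ∧
      ∀ c : ↥C,
        indCF (zpowers (QuaternionGroup.a 1)) (zeroExt _ χ) (c : QuaternionGroup (2 ^ (n - 1)))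
          = (ψ₁ c : ℂ) + (ψ₂ c : ℂ)) ∧
    innerCF (indCF (zpowers (QuaternionGroup.a 1)) (zeroExt _ χ)) (indAug C) = 2 :=
  stmt15_general n χ hχ C hC hcyc
end
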